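/- Let M = (S, I) be a k-colorable paving matroid of rank 2 (i.e., a loopless matroid of rank 2). Then there exists a ⌊4k/3⌋-colorable partition matroid N = (S, J) that is a rank preserving reduction of M, i.e., N ⪯_r M and χ(N) ≤ ⌊4k/3⌋. -/

import Mathlib

open Set

variable {α : Type*}

/-- The ground set of the matroid `M` can be partitioned into `k` independent sets. -/
def Matroid.IsColorable (M : Matroid α) (k : ℕ) : Prop :=
  ∃ I : Fin k → Set α, (∀ i, M.Indep (I i)) ∧ (⋃ i, I i) = M.E ∧
    Pairwise fun i j => Disjoint (I i) (I j)

/-- The coloring number of the matroid `M`: the minimum number of independent sets into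
which the ground set can be partitioned. -/
noncomputable def Matroid.chi (M : Matroid α) : ℕ := sInf {k | M.IsColorable k}

/-- The (extended, cardinality-valued) rank of the matroid `M`. -/
noncomputable def Matroid.rkE (M : Matroid α) : ℕ∞ := ⨆ I ∈ {I | M.Indep I}, I.encard

/-- `N` is the partition matroid determined by the partition `P` of its ground set:
a set is independent iff it meets every class of `P` in at most one element. -/
def Matroid.IsPartitionMatroid (N : Matroid α) (P : Set (Set α)) : Prop :=
  ⋃₀ P = N.E ∧ (∀ c ∈ P, ∀ c' ∈ P, c ≠ c' → Disjoint c c') ∧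
    ∀ X, N.Indep X ↔ X ⊆ N.E ∧ ∀ c ∈ P, (X ∩ c).encard ≤ 1

/-- `N` is a reduction of `M` (written `N ⪯ M`): every `N`-independent set is
`M`-independent. -/
def Matroid.Reduction (N M : Matroid α) : Prop :=
  N.E = M.E ∧ ∀ I, N.Indep I → M.Indep I

/-- `M` is a paving matroid of rank `r`: it has rank `r` and every subset of the ground
set of size at most `r - 1` is independent. -/
def Matroid.IsPavingOfRank (M : Matroid α) (r : ℕ) : Prop :=
  M.rkE = (r : ℕ∞) ∧ ∀ X ⊆ M.E, X.encard ≤ ((r - 1 : ℕ) : ℕ∞) → M.Indep X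

/-- A cut (cocircuit) of the matroid `M`: an inclusionwise minimal subset of the ground
set intersecting every basis. -/
def Matroid.IsCut (M : Matroid α) (X : Set α) : Prop :=
  X ⊆ M.E ∧ (∀ B, M.IsBase B → (X ∩ B).Nonempty) ∧
    ∀ Y, Y ⊂ X → ∃ B, M.IsBase B ∧ Y ∩ B = ∅

/-! Each parallel class of `M` (a fiber of `x ↦ M.closure {x}`) meets every color class at most
once, so it has at most `k` elements, while `|E| ≤ 2k`. Let `A` be a largest union of parallel
classes with `|A| ≤ ⌊4k/3⌋` and `E \ A ≠ ∅`. If `|E \ A| > ⌊4k/3⌋`, then `E \ A` contains two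
parallel classes, each of which could be added to `A` but for the bound, and counting gives
`|E| > 2k`. The partition matroid with classes `A` and `E \ A` has rank `2`, and it is a reduction
of `M` because two non-parallel non-loops are independent. -/

lemma exists_max_image_le {γ : Type*} (g : γ → ℕ) {Q : γ → Prop} {t : ℕ} {x₀ : γ} (h₀ : Q x₀)
    (ht : g x₀ ≤ t) : ∃ x, Q x ∧ g x ≤ t ∧ ∀ y, Q y → g y ≤ t → g y ≤ g x := by
  classical
  obtain ⟨x, hx, hxm⟩ :=
    Nat.findGreatest_spec (P := fun n => ∃ x, Q x ∧ g x = n) ht ⟨x₀, h₀, rfl⟩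
  exact ⟨x, hx, hxm ▸ Nat.findGreatest_le t,
    fun y hy hyt => hxm ▸ Nat.le_findGreatest hyt ⟨y, hy, rfl⟩⟩

namespace Set

variable {β : Type*} {E : Set α} {f : α → β}

lemma ncard_inter_preimage_union (hE : E.Finite) {T U : Set β} (h : Disjoint T U) :
    (E ∩ f ⁻¹' (T ∪ U)).ncard = (E ∩ f ⁻¹' T).ncard + (E ∩ f ⁻¹' U).ncard := by
  rw [preimage_union, inter_union_distrib_left]
  exact ncard_union_eq ((h.preimage f).mono inter_subset_right inter_subset_right)
    (hE.subset inter_subset_left) (hE.subset inter_subset_left)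

lemma ncard_inter_preimage_add_compl (hE : E.Finite) (T : Set β) :
    (E ∩ f ⁻¹' T).ncard + (E ∩ f ⁻¹' Tᶜ).ncard = E.ncard := by
  rw [← ncard_inter_preimage_union hE disjoint_compl_right, union_compl_self, preimage_univ,
    inter_univ]

lemma ncard_inter_preimage_mono (hE : E.Finite) {T U : Set β} (h : T ⊆ U) :
    (E ∩ f ⁻¹' T).ncard ≤ (E ∩ f ⁻¹' U).ncard :=
  ncard_le_ncard (inter_subset_inter_right _ (preimage_mono h)) (hE.subset inter_subset_left)

lemma ncard_inter_preimage_compl_eq (hE : E.Finite) {T : Set β} {b : β} (hb : b ∉ T) :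
    (E ∩ f ⁻¹' Tᶜ).ncard = (E ∩ f ⁻¹' ({b} ∪ T)ᶜ).ncard + (E ∩ f ⁻¹' {b}).ncard := by
  rw [← ncard_inter_preimage_union hE (disjoint_compl_left.mono_right subset_union_left)]
  congr 3
  ext c
  by_cases hc : c = b <;> simp_all

lemma preimage_mem_singleton_eq_or (f : α → β) (T : Set β) (p : Prop) :
    (fun x => f x ∈ T) ⁻¹' {p} = f ⁻¹' T ∨ (fun x => f x ∈ T) ⁻¹' {p} = f ⁻¹' Tᶜ := by
  by_cases hp : p
  · exact Or.inl (by ext; simp [hp])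
  · exact Or.inr (by ext; simp [hp])

theorem exists_balanced_preimage_split (hE : E.Finite) {k : ℕ}
    (hfiber : ∀ b, (E ∩ f ⁻¹' {b}).ncard ≤ k) (hcard : E.ncard ≤ 2 * k)
    {a b : α} (ha : a ∈ E) (hb : b ∈ E) (hab : f a ≠ f b) :
    ∃ T : Set β, (E ∩ f ⁻¹' T).Nonempty ∧ (E ∩ f ⁻¹' Tᶜ).Nonempty ∧
      (E ∩ f ⁻¹' T).ncard ≤ 4 * k / 3 ∧ (E ∩ f ⁻¹' Tᶜ).ncard ≤ 4 * k / 3 := by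
  set t := 4 * k / 3
  have hkt : k ≤ t := by omega
  have hpos : ∀ x ∈ E, 0 < (E ∩ f ⁻¹' {f x}).ncard := fun x hx =>
    (ncard_pos (hE.subset inter_subset_left)).2 ⟨x, hx, rfl⟩
  have hb₀ : (E ∩ f ⁻¹' {f a}ᶜ).Nonempty := ⟨b, hb, Ne.symm hab⟩
  obtain ⟨T, hTc, hTt, hmax⟩ := exists_max_image_le (fun T => (E ∩ f ⁻¹' T).ncard)
    (Q := fun T => (E ∩ f ⁻¹' Tᶜ).Nonempty) hb₀ ((hfiber _).trans hkt)
  have ha₀ := hmax {f a} hb₀ ((hfiber _).trans hkt)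
  refine ⟨T, nonempty_of_ncard_ne_zero (by have := hpos a ha; omega), hTc, hTt, ?_⟩
  by_contra! hbig
  have hsum := ncard_inter_preimage_add_compl hE (f := f) T
  have hgrow : ∀ x ∈ E, f x ∈ Tᶜ → t < (E ∩ f ⁻¹' T).ncard + (E ∩ f ⁻¹' {f x}).ncard := by
    intro x hx hxT
    by_contra! hle
    have hdisj : Disjoint {f x} T := disjoint_singleton_left.2 hxT
    have hU := hmax ({f x} ∪ T)
      (nonempty_of_ncard_ne_zero (by
        have := ncard_inter_preimage_compl_eq (f := f) hE hxT; have := hfiber (f x); omega))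
      (by rw [ncard_inter_preimage_union hE hdisj]; omega)
    rw [ncard_inter_preimage_union hE hdisj] at hU
    have := hpos x hx
    omega
  obtain ⟨x, hx, hxT⟩ := nonempty_of_ncard_ne_zero (s := E ∩ f ⁻¹' Tᶜ) (by omega)
  obtain ⟨y, hy, hyU⟩ := nonempty_of_ncard_ne_zero (s := E ∩ f ⁻¹' ({f x} ∪ T)ᶜ)
    (by have := ncard_inter_preimage_compl_eq (f := f) hE hxT; have := hfiber (f x); omega)
  simp only [compl_union, mem_preimage, mem_inter_iff, mem_compl_iff, mem_singleton_iff] at hyU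
  have hpair : (E ∩ f ⁻¹' {f x}).ncard + (E ∩ f ⁻¹' {f y}).ncard ≤ (E ∩ f ⁻¹' Tᶜ).ncard := by
    rw [← ncard_inter_preimage_union hE (disjoint_singleton.2 (Ne.symm hyU.1))]
    exact ncard_inter_preimage_mono hE
      (union_subset (singleton_subset_iff.2 hxT) (singleton_subset_iff.2 hyU.2))
  have := hgrow x hx hxT
  have := hgrow y hy hyU.2
  -- with `|E| ≤ 2k`, two fibers outside `T` that each overflow the part force `3t < 4k - 2`
  omega

end Set

namespace Matroid

variable {β : Type*} {M N : Matroid α} {I X : Set α} {k : ℕ}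

lemma Indep.encard_le_rkE (hI : M.Indep I) : I.encard ≤ M.rkE :=
  le_iSup₂ (f := fun I (_ : I ∈ {I | M.Indep I}) => I.encard) I hI

lemma rkE_eq_eRank (M : Matroid α) : M.rkE = M.eRank := by
  refine le_antisymm (iSup₂_le fun I hI => hI.encard_le_eRank) ?_
  obtain ⟨B, hB⟩ := M.exists_isBase
  exact hB.encard_eq_eRank ▸ hB.indep.encard_le_rkE

lemma Reduction.rkE_le (h : N.Reduction M) : N.rkE ≤ M.rkE :=
  iSup₂_le fun I hI => (h.2 I hI).encard_le_rkE

lemma exists_indep_pair_of_rkE_eq_two (h : M.rkE = 2) : ∃ a b, a ≠ b ∧ M.Indep {a, b} := by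
  obtain ⟨B, hB⟩ := M.exists_isBase
  obtain ⟨a, b, hab, rfl⟩ := encard_eq_two.1 (hB.encard_eq_eRank.trans (M.rkE_eq_eRank ▸ h))
  exact ⟨a, b, hab, hB.indep⟩

lemma IsPavingOfRank.loopless {r : ℕ} (h : M.IsPavingOfRank r) (hr : 2 ≤ r) : M.Loopless :=
  loopless_iff_forall_isNonloop.2 fun e he => indep_singleton.1 <|
    h.2 {e} (singleton_subset_iff.2 he) (by rw [encard_singleton]; exact_mod_cast (by omega))

lemma Indep.injOn_closure_singleton (hI : M.Indep I) : InjOn (fun x => M.closure {x}) I := by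
  intro u hu v hv huv
  have hnl := hI.isNonloop_of_mem hu
  exact ((hnl.closure_eq_closure_iff_eq_or_dep (hI.isNonloop_of_mem hv)).1 huv).resolve_right
    (not_not.2 (hI.subset (pair_subset hu hv)))

lemma indep_of_encard_le_two [M.Loopless] (hX : X ⊆ M.E) (h2 : X.encard ≤ 2)
    (hinj : InjOn (fun x => M.closure {x}) X) : M.Indep X := by
  obtain hle | hgt := le_or_gt X.encard 1
  · obtain rfl | ⟨x, rfl⟩ := encard_le_one_iff_eq.1 hle
    · exact M.empty_indep
    · exact indep_singleton.2 (isNonloop_of_loopless (hX rfl))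
  obtain ⟨u, v, huv, rfl⟩ := encard_eq_two.1 (h2.antisymm (Order.add_one_le_of_lt hgt))
  have hu := isNonloop_of_loopless (hX (mem_insert u {v}))
  have hv := isNonloop_of_loopless (hX (mem_insert_of_mem u rfl))
  by_contra hdep
  exact huv (hinj (mem_insert u {v}) (mem_insert_of_mem u rfl)
    ((hu.closure_eq_closure_iff_eq_or_dep hv).2 (Or.inr hdep)))

lemma IsColorable.encard_le (hcol : M.IsColorable k) {S : Set α} (hS : S ⊆ M.E) {m : ℕ∞}
    (h : ∀ I, M.Indep I → (S ∩ I).encard ≤ m) : S.encard ≤ k * m := by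
  obtain ⟨I, hI, hIE, -⟩ := hcol
  calc S.encard = (⋃ i, S ∩ I i).encard := by rw [← inter_iUnion, hIE, inter_eq_left.2 hS]
    _ ≤ ∑ i, (S ∩ I i).encard := encard_iUnion_le_of_fintype _
    _ ≤ ∑ _ : Fin k, m := Finset.sum_le_sum fun i _ => h _ (hI i)
    _ = k * m := by simp

lemma IsColorable.encard_ground_le (hcol : M.IsColorable k) : M.E.encard ≤ k * M.rkE :=
  hcol.encard_le subset_rfl fun _ hI => (encard_mono inter_subset_right).trans hI.encard_le_rkE

lemma IsColorable.encard_fiber_le (hcol : M.IsColorable k) {f : α → β}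
    (hf : ∀ I, M.Indep I → InjOn f I) (b : β) : (M.E ∩ f ⁻¹' {b}).encard ≤ k := by
  simpa using hcol.encard_le inter_subset_left fun I hI => encard_le_one_iff.2
    fun u v hu hv => hf I hI hu.2 hv.2 (hu.1.2.trans hv.1.2.symm)

/-- Its independent sets are the subsets of `E` on which `f` is injective, i.e. it is the partition
matroid whose classes are the fibers of `f` in `E`. -/
def fiberPartitionOn (E : Set α) (f : α → β) : Matroid α := (freeOn univ).comapOn E f

lemma fiberPartitionOn_indep_iff {E : Set α} {f : α → β} :
    (fiberPartitionOn E f).Indep I ↔ I ⊆ E ∧ InjOn f I := by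
  simp [fiberPartitionOn, and_comm]

lemma isPartitionMatroid_fiberPartitionOn (E : Set α) (f : α → β) :
    (fiberPartitionOn E f).IsPartitionMatroid (range fun b => E ∩ f ⁻¹' {b}) := by
  refine ⟨?_, ?_, fun X => ?_⟩
  · ext x
    simp [fiberPartitionOn]
  · rintro _ ⟨b, rfl⟩ _ ⟨b', rfl⟩ hne
    exact ((disjoint_singleton.2 fun h => hne (by rw [h])).preimage f).mono
      inter_subset_right inter_subset_right
  · simp only [fiberPartitionOn_indep_iff, forall_mem_range]
    refine and_congr_right fun hXE => ⟨fun hinj b => ?_, fun h u hu v hv huv => ?_⟩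
    · exact encard_le_one_iff.2 fun u v hu hv => hinj hu.1 hv.1 (hu.2.2.trans hv.2.2.symm)
    · exact encard_le_one_iff.1 (h (f v)) u v ⟨hu, hXE hu, huv⟩ ⟨hv, hXE hv, rfl⟩

lemma two_le_rkE_fiberPartitionOn {E : Set α} {f : α → β} {x y : α} (hx : x ∈ E) (hy : y ∈ E)
    (hxy : f x ≠ f y) : 2 ≤ (fiberPartitionOn E f).rkE := by
  have hpair : (fiberPartitionOn E f).Indep {x, y} :=
    fiberPartitionOn_indep_iff.2 ⟨pair_subset hx hy, injOn_pair.2 fun h => absurd h hxy⟩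
  exact (encard_pair fun h => hxy (congrArg f h)).symm.le.trans hpair.encard_le_rkE

lemma reduction_fiberPartitionOn_closure [M.Loopless] (p : Set α → Prop) :
    (fiberPartitionOn M.E fun x => p (M.closure {x})).Reduction M := by
  refine ⟨rfl, fun X hX => ?_⟩
  obtain ⟨hXE, hinj⟩ := fiberPartitionOn_indep_iff.1 hX
  refine indep_of_encard_le_two hXE ?_ (hinj.of_comp (g := p))
  calc X.encard ≤ (univ : Set Prop).encard := encard_le_encard_of_injOn (mapsTo_univ _ _) hinj
    _ = 2 := by simp [encard_univ]

end Matroid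

theorem statement_7_general (M : Matroid α) (k : ℕ)
    (hpav : M.IsPavingOfRank 2) (hcol : M.IsColorable k) :
    ∃ (N : Matroid α) (P : Set (Set α)), N.IsPartitionMatroid P ∧ N.Reduction M ∧
      N.rkE = M.rkE ∧ ∀ c ∈ P, c.encard ≤ ((4 * k / 3 : ℕ) : ℕ∞) := by
  have := hpav.loopless le_rfl
  set cl := fun x => M.closure {x}
  have hground : M.E.encard ≤ (2 * k : ℕ) := by
    simpa [hpav.1, mul_comm] using hcol.encard_ground_le
  have hfin : M.E.Finite := (encard_le_coe_iff_finite_ncard_le.1 hground).1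
  have hfiber (c : Set α) : (M.E ∩ cl ⁻¹' {c}).ncard ≤ k :=
    (encard_le_coe_iff_finite_ncard_le.1
      (hcol.encard_fiber_le (fun _ hI => hI.injOn_closure_singleton) c)).2
  obtain ⟨a, b, hab, hIab⟩ := Matroid.exists_indep_pair_of_rkE_eq_two hpav.1
  have ha := hIab.subset_ground (mem_insert a {b})
  have hb := hIab.subset_ground (mem_insert_of_mem a rfl)
  obtain ⟨T, ⟨x, hx, hxT⟩, ⟨y, hy, hyT⟩, hTt, hTct⟩ := exists_balanced_preimage_split hfin hfiber
    (encard_le_coe_iff_finite_ncard_le.1 hground).2 ha hb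
    (hIab.injOn_closure_singleton.ne (mem_insert a {b}) (mem_insert_of_mem a rfl) hab)
  have hred := Matroid.reduction_fiberPartitionOn_closure (M := M) (· ∈ T)
  refine ⟨_, _, Matroid.isPartitionMatroid_fiberPartitionOn _ _, hred, hred.rkE_le.antisymm ?_, ?_⟩
  · rw [hpav.1]
    exact Matroid.two_le_rkE_fiberPartitionOn hx hy fun h => hyT (cast h hxT)
  rintro _ ⟨p, rfl⟩
  change (M.E ∩ (fun x => cl x ∈ T) ⁻¹' {p}).encard ≤ _
  obtain h | h := preimage_mem_singleton_eq_or cl T p <;> rw [h] <;>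
    exact encard_le_coe_iff_finite_ncard_le.2 ⟨hfin.subset inter_subset_left, ‹_›⟩

/-- A `k`-colorable paving matroid of rank `2` admits a rank preserving reduction to a
`⌊4k/3⌋`-colorable partition matroid. -/
theorem statement_7 (M : Matroid α) (hfin : M.E.Finite) (k : ℕ)
    (hpav : M.IsPavingOfRank 2) (hcol : M.IsColorable k) :
    ∃ (N : Matroid α) (P : Set (Set α)), N.IsPartitionMatroid P ∧ N.Reduction M ∧
      N.rkE = M.rkE ∧ ∀ c ∈ P, c.encard ≤ ((4 * k / 3 : ℕ) : ℕ∞) :=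
  statement_7_general M k hpav hcol
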